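/- arXiv:1804.09290 — 2 statements merged into one kernel-verified Lean document; each statement's English description precedes it below -/
import Mathlib

section
/- Let k and n be positive integers and x = (x_1,...,x_n) elements of a commutative ring. Define Q_k(x) = Σ_{i=1}^n (x_i^{2k} + (-x_i)^{2k} + (2x_i)^{2k} + (-2x_i)^{2k}) + Σ_{1≤i<j≤n} ((x_i+x_j)^{2k} + (x_i-x_j)^{2k} + (-x_i+x_j)^{2k} + (-x_i-x_j)^{2k}). Then Q_k(x) = (4^k + 4n + 2)·S_{2k}(x) + 2·Σ_{t=1}^{k-1} C(2k,2t)·S_{2t}(x)·S_{2(k-t)}(x), where S_m(x) = Σ_{i=1}^n x_i^m. -/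
open Finset

lemma kim_split_even_odd {R : Type*} [AddCommMonoid R] (k : ℕ) (g : ℕ → R) :
    ∑ j ∈ range (2*k+1), g j
      = ∑ s ∈ range (k+1), g (2*s) + ∑ s ∈ range k, g (2*s+1) := by
  induction k with
  | zero => simp
  | succ k ih =>
    have h1 : 2*(k+1)+1 = (2*k+1)+1+1 := by ring
    have h2 : 2*(k+1) = 2*k+1+1 := by ring
    rw [h1, sum_range_succ, sum_range_succ, ih,
      sum_range_succ (f := fun s => g (2*s)) (n := k+1),
      sum_range_succ (f := fun s => g (2*s+1)) (n := k), h2]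
    abel

lemma kim_binom {R : Type*} [CommRing R] (k : ℕ) (a b : R) :
    (a+b)^(2*k) + (a-b)^(2*k)
      = 2 * ∑ s ∈ range (k+1),
          (Nat.choose (2*k) (2*s) : R) * a^(2*s) * b^(2*(k-s)) := by
  rw [add_pow, sub_eq_add_neg, add_pow, ← sum_add_distrib, kim_split_even_odd]
  have hodd : ∑ s ∈ range k,
      (a ^ (2*s+1) * b ^ (2*k - (2*s+1)) * ((2*k).choose (2*s+1) : R)
        + a ^ (2*s+1) * (-b) ^ (2*k - (2*s+1)) * ((2*k).choose (2*s+1) : R)) = 0 := by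
    refine sum_eq_zero fun s hs => ?_
    have hs' : s < k := mem_range.mp hs
    have ho : Odd (2*k - (2*s+1)) := ⟨k - s - 1, by omega⟩
    rw [ho.neg_pow]; ring
  rw [hodd, add_zero, mul_sum]
  refine sum_congr rfl fun s hs => ?_
  have hs' : s ≤ k := Nat.lt_succ_iff.mp (mem_range.mp hs)
  have he : 2*k - 2*s = 2*(k-s) := by omega
  have hev : Even (2*(k-s)) := even_two_mul _
  rw [he, hev.neg_pow]; ring

lemma kim_inner {R : Type*} [CommRing R] (k n : ℕ) (x : Fin n → R) (a : R) :
    ∑ j, ((a + x j)^(2*k) + (a - x j)^(2*k))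
      = 2 * ∑ s ∈ range (k+1), (Nat.choose (2*k) (2*s) : R)
          * a^(2*s) * (∑ j, (x j)^(2*(k-s))) := by
  simp_rw [kim_binom]
  rw [← Finset.mul_sum, Finset.sum_comm]
  simp_rw [← Finset.mul_sum]

lemma kim_double {R : Type*} [CommRing R] (k n : ℕ) (x : Fin n → R) :
    ∑ i, ∑ j, ((x i + x j)^(2*k) + (x i - x j)^(2*k))
      = 2 * ∑ s ∈ range (k+1), (Nat.choose (2*k) (2*s) : R)
          * (∑ i, (x i)^(2*s)) * (∑ i, (x i)^(2*(k-s))) := by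
  simp_rw [kim_inner]
  rw [← Finset.mul_sum, Finset.sum_comm]
  simp_rw [← Finset.sum_mul, ← Finset.mul_sum]

lemma kim_pairs {R : Type*} [CommRing R] (k n : ℕ) (hk : 0 < k) (x : Fin n → R) :
    ∑ i, ∑ j, ((x i + x j)^(2*k) + (x i - x j)^(2*k))
      = 2 * (∑ q ∈ univ.filter (fun q : Fin n × Fin n => q.1 < q.2),
          ((x q.1 + x q.2)^(2*k) + (x q.1 - x q.2)^(2*k)))
        + (4:R)^k * ∑ i, (x i)^(2*k) := by
  set f : Fin n × Fin n → R := fun q => (x q.1 + x q.2)^(2*k) + (x q.1 - x q.2)^(2*k) with hf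
  have h0 : ∑ i, ∑ j, ((x i + x j)^(2*k) + (x i - x j)^(2*k)) = ∑ q : Fin n × Fin n, f q := by
    rw [← Finset.univ_product_univ, Finset.sum_product]
  rw [h0, ← Finset.sum_filter_add_sum_filter_not univ (fun q : Fin n × Fin n => q.1 < q.2) f]
  rw [← Finset.sum_filter_add_sum_filter_not
      (univ.filter (fun q : Fin n × Fin n => ¬ q.1 < q.2)) (fun q => q.2 < q.1) f]
  have e1 : (univ.filter (fun q : Fin n × Fin n => ¬ q.1 < q.2)).filter (fun q => q.2 < q.1)
      = univ.filter (fun q : Fin n × Fin n => q.2 < q.1) := by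
    rw [Finset.filter_filter]
    exact Finset.filter_congr fun q _ => by constructor <;> [exact And.right; exact fun h => ⟨not_lt_of_gt h, h⟩]
  have e2 : (univ.filter (fun q : Fin n × Fin n => ¬ q.1 < q.2)).filter (fun q => ¬ q.2 < q.1)
      = univ.filter (fun q : Fin n × Fin n => q.1 = q.2) := by
    rw [Finset.filter_filter]
    refine Finset.filter_congr fun q _ => ?_
    constructor
    · rintro ⟨h1, h2⟩; exact le_antisymm (not_lt.mp h2) (not_lt.mp h1)
    · intro h; rw [h]; simp
  rw [e1, e2]
  have e3 : ∑ q ∈ univ.filter (fun q : Fin n × Fin n => q.2 < q.1), f q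
      = ∑ q ∈ univ.filter (fun q : Fin n × Fin n => q.1 < q.2), f q := by
    refine Finset.sum_nbij' (fun q => Prod.swap q) (fun q => Prod.swap q) ?_ ?_ ?_ ?_ ?_
    · intro q hq; simp_all
    · intro q hq; simp_all
    · intro q _; simp
    · intro q _; simp
    · intro q _
      simp only [hf, Prod.fst_swap, Prod.snd_swap]
      have hev : Even (2*k) := even_two_mul k
      rw [add_comm (x q.2) (x q.1), ← neg_sub (x q.1) (x q.2), hev.neg_pow]
  have e4 : ∑ q ∈ univ.filter (fun q : Fin n × Fin n => q.1 = q.2), f q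
      = (4:R)^k * ∑ i, (x i)^(2*k) := by
    rw [Finset.mul_sum]
    refine Finset.sum_nbij' (fun q => q.1) (fun i => (i, i)) ?_ ?_ ?_ ?_ ?_
    · intro q hq; simp
    · intro i _; simp
    · intro q hq; simp only [mem_filter, mem_univ, true_and] at hq
      exact Prod.ext rfl hq
    · intro i _; simp
    · intro q hq
      simp only [mem_filter, mem_univ, true_and] at hq
      simp only [hf, ← hq, sub_self]
      rw [zero_pow (by omega), add_zero]
      have : x q.1 + x q.1 = 2 * x q.1 := by ring
      rw [this, mul_pow]
      rw [show (2:R)^(2*k) = 4^k by rw [pow_mul]; norm_num]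
  rw [e3, e4, two_mul]
  ring

open Finset in
/-- Kim's power-sum identity in a commutative ring. -/
theorem kim_formula (R : Type*) [CommRing R] (k n : ℕ) (hk : 0 < k) (hn : 0 < n)
    (x : Fin n → R) :
    (∑ i, ((x i) ^ (2 * k) + (-x i) ^ (2 * k) + (2 * x i) ^ (2 * k)
        + (-(2 * x i)) ^ (2 * k))) +
      (∑ q ∈ univ.filter (fun q : Fin n × Fin n => q.1 < q.2),
        ((x q.1 + x q.2) ^ (2 * k) + (x q.1 - x q.2) ^ (2 * k)
          + (-x q.1 + x q.2) ^ (2 * k) + (-x q.1 - x q.2) ^ (2 * k))) =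
    ((4 ^ k + 4 * n + 2 : ℕ) : R) * (∑ i, (x i) ^ (2 * k))
      + 2 * ∑ t ∈ Finset.Ico 1 k,
          ((Nat.choose (2 * k) (2 * t) : R) * (∑ i, (x i) ^ (2 * t))
            * (∑ i, (x i) ^ (2 * (k - t)))) := by
  have hev : Even (2*k) := even_two_mul k
  have h1 : ∑ i, ((x i)^(2*k) + (-x i)^(2*k) + (2*x i)^(2*k) + (-(2*x i))^(2*k))
      = (2 + 2*(4:R)^k) * ∑ i, (x i)^(2*k) := by
    rw [Finset.mul_sum]
    refine sum_congr rfl fun i _ => ?_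
    rw [hev.neg_pow, hev.neg_pow, mul_pow,
      show (2:R)^(2*k) = 4^k by rw [pow_mul]; norm_num]
    ring
  have h2 : ∑ q ∈ univ.filter (fun q : Fin n × Fin n => q.1 < q.2),
        ((x q.1 + x q.2) ^ (2 * k) + (x q.1 - x q.2) ^ (2 * k)
          + (-x q.1 + x q.2) ^ (2 * k) + (-x q.1 - x q.2) ^ (2 * k))
      = 2 * ∑ q ∈ univ.filter (fun q : Fin n × Fin n => q.1 < q.2),
          ((x q.1 + x q.2)^(2*k) + (x q.1 - x q.2)^(2*k)) := by
    rw [Finset.mul_sum]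
    refine sum_congr rfl fun q _ => ?_
    rw [show -x q.1 + x q.2 = -(x q.1 - x q.2) by ring,
      show -x q.1 - x q.2 = -(x q.1 + x q.2) by ring, hev.neg_pow, hev.neg_pow]
    ring
  have hD := kim_pairs k n hk x
  rw [kim_double k n x] at hD
  have hk1 : k - 1 + 1 = k := Nat.succ_pred_eq_of_pos hk
  have hrange : ∑ s ∈ range (k+1), (Nat.choose (2*k) (2*s) : R)
          * (∑ i, (x i)^(2*s)) * (∑ i, (x i)^(2*(k-s)))
      = (n:R) * (∑ i, (x i)^(2*k)) + (∑ i, (x i)^(2*k)) * (n:R)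
        + ∑ t ∈ Finset.Ico 1 k,
          ((Nat.choose (2 * k) (2 * t) : R) * (∑ i, (x i) ^ (2 * t))
            * (∑ i, (x i) ^ (2 * (k - t)))) := by
    rw [Finset.sum_range_succ, ← hk1, Finset.sum_range_succ']
    have ha : ∑ t ∈ Finset.Ico 1 (k-1+1),
          ((Nat.choose (2 * (k-1+1)) (2 * t) : R) * (∑ i, (x i) ^ (2 * t))
            * (∑ i, (x i) ^ (2 * (k-1+1 - t))))
        = ∑ s ∈ range (k-1), (Nat.choose (2*(k-1+1)) (2*(s+1)) : R)
            * (∑ i, (x i)^(2*(s+1))) * (∑ i, (x i)^(2*(k-1+1-(s+1)))) := by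
      rw [Finset.sum_Ico_eq_sum_range]
      simp only [Nat.add_sub_cancel]
      exact sum_congr rfl fun s _ => by rw [Nat.add_comm 1 s]
    rw [ha]
    have hb : (Nat.choose (2*(k-1+1)) (2*0) : R) * (∑ i, (x i)^(2*0))
        * (∑ i, (x i)^(2*(k-1+1-0))) = (n:R) * (∑ i, (x i)^(2*(k-1+1))) := by
      simp [Finset.card_fin]
    have hc : (Nat.choose (2*(k-1+1)) (2*(k-1+1)) : R) * (∑ i, (x i)^(2*(k-1+1)))
        * (∑ i, (x i)^(2*(k-1+1-(k-1+1)))) = (∑ i, (x i)^(2*(k-1+1))) * (n:R) := by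
      simp [Finset.card_fin]
    rw [hb, hc]
    ring
  rw [hrange] at hD
  rw [h1, h2]
  push_cast
  linear_combination -hD
end

section
/- Let n ≡ 8 (mod 25) and let x_1,...,x_n ∈ Z/5Z. Suppose that the multiset {0} ∪ {x_i, 2x_i, -x_i, -2x_i : 1 ≤ i ≤ n} ∪ {x_i+x_j, x_i-x_j, -x_i+x_j, -x_i-x_j : 1 ≤ i < j ≤ n} contains every element of Z/5Z exactly m times, where 2n^2+2n+1 = 5m. Then a contradiction follows (no such x_1,...,x_n exist). -/
/-!
Let `A`, `P`, `Q` be the numbers of `xᵢ` equal to `0`, to `±1` and to `±2`. Summing over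
ordered pairs `(i, j)` and removing the diagonal expresses the multiplicities of `0`, `1`, `2` as
quadratic polynomials in `A`, `P`, `Q`. Equating those of `1` and `2` gives
`(P - Q)(5A + 1 - n) = 0`. Since `n ≡ 3 (mod 5)`, `P = Q`, and then the multiplicity of `0`
together with `5m = 2n² + 2n + 1` gives `8n² + 8n + 4 ≡ 0 (mod 25)`,
false for `n ≡ 8 (mod 25)`.
-/

open Finset Multiset

section Fibers

variable {ι κ M : Type*} [Fintype ι] [DecidableEq κ]

def fiberCard (x : ι → κ) (t : κ) : ℕ := #{i | x i = t}

variable [Fintype κ] [AddCommMonoid M]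

theorem sum_comp_eq_sum_fiberCard_nsmul (x : ι → κ) (F : κ → M) :
    ∑ i, F (x i) = ∑ t, fiberCard x t • F t := by
  simp only [← Finset.sum_fiberwise' univ x F, sum_const, fiberCard]

theorem sum_fiberCard (x : ι → κ) : ∑ t, fiberCard x t = Fintype.card ι := by
  simpa using (sum_comp_eq_sum_fiberCard_nsmul x fun _ => (1 : ℕ)).symm

theorem sum_sum_comp_eq_sum_sum_fiberCard_nsmul (x : ι → κ) (G : κ → κ → M) :
    ∑ i, ∑ j, G (x i) (x j) = ∑ s, ∑ t, (fiberCard x s * fiberCard x t) • G s t :=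
  calc ∑ i, ∑ j, G (x i) (x j)
      = ∑ i, ∑ t, fiberCard x t • G (x i) t :=
        sum_congr rfl fun i _ => sum_comp_eq_sum_fiberCard_nsmul x (G (x i))
    _ = ∑ t, fiberCard x t • ∑ i, G (x i) t := by
        rw [sum_comm]; simp only [Finset.smul_sum]
    _ = ∑ t, fiberCard x t • ∑ s, fiberCard x s • G s t :=
        sum_congr rfl fun t _ => by rw [sum_comp_eq_sum_fiberCard_nsmul x (fun s => G s t)]
    _ = ∑ s, ∑ t, (fiberCard x s * fiberCard x t) • G s t := by
        rw [sum_comm]; simp only [Finset.smul_sum, mul_comm, mul_smul]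

end Fibers

theorem two_nsmul_sum_filter_lt_add_sum_diag {ι M : Type*} [Fintype ι] [LinearOrder ι]
    [AddCommMonoid M] (g : ι → ι → M) (hg : ∀ i j, g i j = g j i) :
    2 • ∑ q ∈ univ.filter (fun q : ι × ι => q.1 < q.2), g q.1 q.2 + ∑ i, g i i
      = ∑ i, ∑ j, g i j := by
  have swap : ∑ q ∈ univ.filter (fun q : ι × ι => q.1 < q.2), g q.1 q.2
      = ∑ q ∈ univ.filter (fun q : ι × ι => q.2 < q.1), g q.1 q.2 :=
    sum_equiv (Equiv.prodComm ι ι) (by simp) (by simp [hg])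
  have diag : ∑ i, g i i = ∑ q ∈ univ.filter (fun q : ι × ι => q.1 = q.2), g q.1 q.2 := by
    rw [sum_filter, Fintype.sum_prod_type]
    simp
  have trichotomy : ∀ q : ι × ι, (if q.1 < q.2 then g q.1 q.2 else 0)
      + (if q.2 < q.1 then g q.1 q.2 else 0) + (if q.1 = q.2 then g q.1 q.2 else 0)
      = g q.1 q.2 := by
    intro q
    rcases lt_trichotomy q.1 q.2 with h | h | h
    · simp [h, lt_asymm h, h.ne]
    · simp [h]
    · simp [h, lt_asymm h, h.ne']
  calc _ = ∑ q ∈ univ.filter (fun q : ι × ι => q.1 < q.2), g q.1 q.2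
        + ∑ q ∈ univ.filter (fun q : ι × ι => q.2 < q.1), g q.1 q.2
        + ∑ q ∈ univ.filter (fun q : ι × ι => q.1 = q.2), g q.1 q.2 := by
        rw [two_nsmul, ← swap, ← diag]
    _ = ∑ q : ι × ι, g q.1 q.2 := by
        simp only [sum_filter, ← sum_add_distrib, trichotomy]
    _ = _ := Fintype.sum_prod_type' g

section SignedSums

variable {R : Type*} [Ring R]

def signedMultiples (a : R) : Multiset R := {a, 2 * a, -a, -(2 * a)}

def signedPairSums (a b : R) : Multiset R := {a + b, a - b, -a + b, -a - b}

theorem signedPairSums_comm (a b : R) : signedPairSums a b = signedPairSums b a := by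
  rw [signedPairSums, signedPairSums, add_comm b a, ← neg_add_eq_sub a b, neg_add_eq_sub b a,
    show -b - a = -a - b by abel]
  exact congrArg (cons (a + b)) (cons_swap _ _ _)

def signedSumMultiset {ι : Type*} [Fintype ι] [LinearOrder ι] (x : ι → R) : Multiset R :=
  {0} + (univ.val.bind fun i => signedMultiples (x i))
    + ((univ.filter fun q : ι × ι => q.1 < q.2).val.bind fun q => signedPairSums (x q.1) (x q.2))

variable [Fintype R] [DecidableEq R] {ι : Type*} [Fintype ι] [LinearOrder ι]

theorem two_mul_count_signedSumMultiset_add (x : ι → R) (c : R) :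
    2 * count c (signedSumMultiset x) + ∑ t, fiberCard x t * count c (signedPairSums t t)
      = 2 * count c {0} + 2 * ∑ t, fiberCard x t * count c (signedMultiples t)
        + ∑ s, ∑ t, fiberCard x s * fiberCard x t * count c (signedPairSums s t) := by
  have pairs := two_nsmul_sum_filter_lt_add_sum_diag
    (fun i j => count c (signedPairSums (x i) (x j))) fun i j => by rw [signedPairSums_comm]
  rw [sum_sum_comp_eq_sum_sum_fiberCard_nsmul x fun s t => count c (signedPairSums s t),
    sum_comp_eq_sum_fiberCard_nsmul x fun t => count c (signedPairSums t t)] at pairs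
  simp only [smul_eq_mul] at pairs
  rw [signedSumMultiset, count_add, count_add, count_bind, count_bind, ← sum_eq_multiset_sum,
    ← sum_eq_multiset_sum, ← pairs,
    sum_comp_eq_sum_fiberCard_nsmul x fun t => count c (signedMultiples t)]
  simp only [smul_eq_mul]
  ring

end SignedSums

theorem ZMod.sum_univ_five {M : Type*} [AddCommMonoid M] (f : ZMod 5 → M) :
    ∑ t, f t = f 0 + f 1 + f 2 + f 3 + f 4 :=
  Fin.sum_univ_five f

section ZModFive

variable {ι : Type*} [Fintype ι] [LinearOrder ι] (x : ι → ZMod 5)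

theorem count_zero_signedSumMultiset :
    let A := fiberCard x 0; let P := fiberCard x 1 + fiberCard x 4
    let Q := fiberCard x 2 + fiberCard x 3
    count 0 (signedSumMultiset x) + 2 * A + P + Q = 1 + 4 * A + 2 * A ^ 2 + P ^ 2 + Q ^ 2 := by
  have h := two_mul_count_signedSumMultiset_add x 0
  simp +decide only [ZMod.sum_univ_five, signedPairSums, signedMultiples,
    insert_eq_cons, count_cons, count_singleton, ↓reduceIte] at h
  intro A P Q
  simp only [A, P, Q]
  ring_nf at h ⊢
  omega

theorem two_mul_count_one_signedSumMultiset :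
    let A := fiberCard x 0; let P := fiberCard x 1 + fiberCard x 4
    let Q := fiberCard x 2 + fiberCard x 3
    2 * count 1 (signedSumMultiset x) + Q = 2 * (P + Q) + 4 * A * P + 2 * P * Q + Q ^ 2 := by
  have h := two_mul_count_signedSumMultiset_add x 1
  simp +decide only [ZMod.sum_univ_five, signedPairSums, signedMultiples,
    insert_eq_cons, count_cons, count_singleton, ↓reduceIte] at h
  intro A P Q
  simp only [A, P, Q]
  ring_nf at h ⊢
  omega

theorem two_mul_count_two_signedSumMultiset :
    let A := fiberCard x 0; let P := fiberCard x 1 + fiberCard x 4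
    let Q := fiberCard x 2 + fiberCard x 3
    2 * count 2 (signedSumMultiset x) + P = 2 * (P + Q) + 4 * A * Q + 2 * P * Q + P ^ 2 := by
  have h := two_mul_count_signedSumMultiset_add x 2
  simp +decide only [ZMod.sum_univ_five, signedPairSums, signedMultiples,
    insert_eq_cons, count_cons, count_singleton, ↓reduceIte] at h
  intro A P Q
  simp only [A, P, Q]
  ring_nf at h ⊢
  omega

end ZModFive

open Finset in
/-- If n ≡ 8 (mod 25) and 2n²+2n+1 = 5m, then the multiset
{0} ∪ {±xᵢ, ±2xᵢ} ∪ {±xᵢ ± xⱼ : i < j} cannot contain every element of ℤ/5ℤ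
exactly m times. -/
theorem no_equidistributed_multiset (n : ℕ) (hn : n % 25 = 8) (x : Fin n → ZMod 5)
    (m : ℕ) (hm : 2 * n ^ 2 + 2 * n + 1 = 5 * m)
    (h : ∀ c : ZMod 5,
      Multiset.count c
        (({0} : Multiset (ZMod 5))
          + (Finset.univ.val.bind fun i : Fin n =>
              {x i, 2 * x i, -x i, -(2 * x i)})
          + ((Finset.univ.filter fun q : Fin n × Fin n => q.1 < q.2).val.bind fun q =>
              {x q.1 + x q.2, x q.1 - x q.2, -x q.1 + x q.2, -x q.1 - x q.2})) = m) :
    False := by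
  have hcount : ∀ c, count c (signedSumMultiset x) = m := h
  have h0 := count_zero_signedSumMultiset x
  have h1 := two_mul_count_one_signedSumMultiset x
  have h2 := two_mul_count_two_signedSumMultiset x
  have hcard := sum_fiberCard x
  simp only [ZMod.sum_univ_five, Fintype.card_fin] at hcard
  simp only [hcount] at h0 h1 h2
  set A := fiberCard x 0
  set P := fiberCard x 1 + fiberCard x 4
  set Q := fiberCard x 2 + fiberCard x 3
  have hn' : A + P + Q = n := by omega
  obtain ⟨N, rfl⟩ : ∃ N, n = 25 * N + 8 := ⟨n / 25, by omega⟩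
  zify at h0 h1 h2 hn' hm
  have hfactor : ((P : ℤ) - Q) * (5 * A + 1 - (25 * N + 8)) = 0 := by
    linear_combination h2 - h1 + (P - Q) * hn'
  rcases mul_eq_zero.mp hfactor with hPQ | h5A
  · have hA : (A : ℤ) = 25 * N + 8 - 2 * P := by linear_combination hn' + hPQ
    rw [hA, ← sub_eq_zero.mp hPQ] at h0
    -- `8n² + 8n + 4 - 40nP + 50P² - 30P = 0` at `n = 25N + 8`; `50 ∤ 580`
    have : 50 * (100 * N ^ 2 + 68 * N - 20 * N * P - 7 * P + P ^ 2 : ℤ) + 580 = 0 := by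
      linear_combination -5 * h0 - hm
    omega
  · omega
end
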